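/- arXiv:2302.13605 — 7 statements merged into one kernel-verified Lean document; each statement's English description precedes it below -/
import Mathlib

section
/- Every connected component of a paw-free graph is either triangle-free or complete multipartite. -/
section Aux

variable {V : Type*} {G : SimpleGraph V}

/-- Walk-induction helper: a predicate closed under edges propagates along reachability. -/
private lemma reach_ind {R : V → Prop} (hR : ∀ u v, R u → G.Adj u v → R v) :
    ∀ {a y : V}, G.Walk a y → R a → R y := by
  intro a y p
  induction p with
  | nil => exact id
  | cons h' p ih => exact fun ha => ih (hR _ _ ha h')

/-- Lemma A: a vertex adjacent to one vertex of a triangle is adjacent to another. -/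
private lemma lemA
    (hpaw : ¬ ∃ a b c d : V, a ≠ b ∧ a ≠ c ∧ a ≠ d ∧ b ≠ c ∧ b ≠ d ∧ c ≠ d ∧
      G.Adj a b ∧ G.Adj a c ∧ G.Adj b c ∧ G.Adj a d ∧ ¬ G.Adj b d ∧ ¬ G.Adj c d) :
    ∀ a b c d : V, G.Adj a b → G.Adj a c → G.Adj b c → G.Adj a d → d ≠ b → d ≠ c →
      G.Adj d b ∨ G.Adj d c := by
  intro a b c d hab hac hbc had hdb hdc
  by_contra h
  push_neg at h
  exact hpaw ⟨a, b, c, d, hab.ne, hac.ne, had.ne, hbc.ne, hdb.symm, hdc.symm,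
    hab, hac, hbc, had, fun hbd => h.1 hbd.symm, fun hcd => h.2 hcd.symm⟩

/-- Lemma D: if `x` lies in a triangle and `u` is a neighbor of `x`, there is a common
neighbor of `x` and `u`. -/
private lemma lemD
    (hA : ∀ a b c d : V, G.Adj a b → G.Adj a c → G.Adj b c → G.Adj a d → d ≠ b → d ≠ c →
      G.Adj d b ∨ G.Adj d c)
    {x a b u : V} (hxa : G.Adj x a) (hxb : G.Adj x b) (hab : G.Adj a b)
    (hxu : G.Adj x u) : ∃ c, G.Adj x c ∧ G.Adj u c := by
  by_cases hu : u = a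
  · exact ⟨b, hxb, hu ▸ hab⟩
  by_cases hu' : u = b
  · exact ⟨a, hxa, hu' ▸ hab.symm⟩
  rcases hA x a b u hxa hxb hab hxu hu hu' with h | h
  · exact ⟨a, hxa, h⟩
  · exact ⟨b, hxb, h⟩

/-- Key step: given a triangle `x z w` and `u` adjacent to `x`, any neighbor `v` of `u`
is adjacent to `x` or to `z`. -/
private lemma key
    (hA : ∀ a b c d : V, G.Adj a b → G.Adj a c → G.Adj b c → G.Adj a d → d ≠ b → d ≠ c →
      G.Adj d b ∨ G.Adj d c)
    {x z w u v : V} (hxz : G.Adj x z) (hxw : G.Adj x w) (hzw : G.Adj z w)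
    (hux : G.Adj u x) (huv : G.Adj u v) : G.Adj v x ∨ G.Adj v z := by
  by_cases huz : u = z
  · exact Or.inr (huz ▸ huv).symm
  by_cases hvx : v = x
  · exact Or.inr (hvx ▸ hxz)
  by_cases hvz : v = z
  · exact Or.inl (hvz ▸ hxz.symm)
  have huz_or : G.Adj u z ∨ G.Adj u w := by
    by_cases huw : u = w
    · exact Or.inl (huw ▸ hzw.symm)
    · exact hA x z w u hxz hxw hzw hux.symm huz huw
  rcases huz_or with huz' | huw'
  · exact hA u x z v hux huz' hxz huv hvx hvz
  · by_cases hvw : v = w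
    · exact Or.inl (hvw ▸ hxw.symm)
    rcases hA u x w v hux huw' hxw huv hvx hvw with h | hvw'
    · exact Or.inl h
    · exact hA w x z v hxw.symm hzw.symm hxz hvw'.symm hvx hvz

end Aux

/-- Every connected component of a paw-free graph is either triangle-free
or complete multipartite. -/
theorem paw_free_components {V : Type*} (G : SimpleGraph V)
    (hpaw : ¬ ∃ a b c d : V, a ≠ b ∧ a ≠ c ∧ a ≠ d ∧ b ≠ c ∧ b ≠ d ∧ c ≠ d ∧
      G.Adj a b ∧ G.Adj a c ∧ G.Adj b c ∧ G.Adj a d ∧ ¬ G.Adj b d ∧ ¬ G.Adj c d) :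
    ∀ K : G.ConnectedComponent,
      (¬ ∃ u v w : K.supp, G.Adj u.1 v.1 ∧ G.Adj u.1 w.1 ∧ G.Adj v.1 w.1) ∨
      (∃ s : Setoid K.supp, ∀ u v : K.supp, G.Adj u.1 v.1 ↔ ¬ s.r u v) := by
  intro K
  by_cases htri : ∃ u v w : K.supp, G.Adj u.1 v.1 ∧ G.Adj u.1 w.1 ∧ G.Adj v.1 w.1
  · right
    have hA := lemA hpaw
    obtain ⟨u0, v0, w0, h1, h2, h3⟩ := htri
    have hreach : ∀ a b : K.supp, G.Reachable a.1 b.1 := by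
      intro a b
      have ha := a.2; have hb := b.2
      rw [SimpleGraph.ConnectedComponent.mem_supp_iff] at ha hb
      exact SimpleGraph.ConnectedComponent.exact (ha.trans hb.symm)
    -- every vertex of K lies in a triangle
    have hP : ∀ a : K.supp, ∃ p q, G.Adj a.1 p ∧ G.Adj a.1 q ∧ G.Adj p q := by
      intro a
      obtain ⟨pth⟩ := hreach u0 a
      refine reach_ind (R := fun y => ∃ p q, G.Adj y p ∧ G.Adj y q ∧ G.Adj p q)
        ?_ pth ⟨v0.1, w0.1, h1, h2, h3⟩
      rintro u v ⟨p, q, hup, huq, hpq⟩ huv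
      obtain ⟨c, huc, hvc⟩ := lemD hA hup huq hpq huv
      exact ⟨u, c, huv.symm, hvc, huc⟩
    -- non-adjacency is transitive on K
    have htrans : ∀ a b c : K.supp, ¬ G.Adj a.1 b.1 → ¬ G.Adj b.1 c.1 → ¬ G.Adj a.1 c.1 := by
      intro a b c hab hbc hac
      obtain ⟨p, q, hap, haq, hpq⟩ := hP a
      obtain ⟨w, haw, hcw⟩ := lemD hA hap haq hpq hac
      have hRb : G.Adj b.1 a.1 ∨ G.Adj b.1 c.1 := by
        obtain ⟨pth⟩ := hreach a b
        refine reach_ind (R := fun y => G.Adj y a.1 ∨ G.Adj y c.1) ?_ pth (Or.inr hac)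
        intro u v hu huv
        rcases hu with hu | hu
        · exact key hA hac haw hcw hu huv
        · exact (key hA hac.symm hcw haw hu huv).symm
      rcases hRb with h | h
      · exact hab h.symm
      · exact hbc h
    refine ⟨⟨fun a b => ¬ G.Adj a.1 b.1, ⟨fun a => G.irrefl, fun h hadj => h hadj.symm,
      fun {a b c} hab hbc => htrans a b c hab hbc⟩⟩, ?_⟩
    exact fun u v => not_not.symm
  · exact Or.inl htri
end

section
/- Let G be a graph containing an induced subgraph isomorphic to K_{1,t,k+1} (a vertex w adjacent to all vertices of t+1 disjoint cliques each of size k+1, with no edges between distinct cliques), where the only neighbors in G of the clique vertices are w and their own clique. Then for every set F of at most k edges of G, the contracted graph G/F contains an induced K_{1,t}. -/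
/-!
Contracting `F` merges vertices along the connected components of the graph with edge set `F`.
As `|F| ≤ k`, the component of `w` contains at most `k` vertices besides `w`, so each clique of
size `k + 1` keeps a vertex `aᵢ` outside it. Since `w` is the only exit from a clique, the class
of `aᵢ` stays inside its clique; hence the classes of `a₁, …, aₜ` are distinct, pairwise
nonadjacent, and adjacent to the class of `w`.
-/

variable {V W : Type*}

/-- Contraction of a graph by a partition (setoid): two classes are adjacent
iff they are distinct and joined by an edge of `G`. -/
def contractQ (G : SimpleGraph V) (s : Setoid V) : SimpleGraph (Quotient s) where
  Adj x y := x ≠ y ∧ ∃ a b : V, Quotient.mk s a = x ∧ Quotient.mk s b = y ∧ G.Adj a b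
  symm := by
    constructor
    rintro x y ⟨hne, a, b, ha, hb, hab⟩
    exact ⟨hne.symm, b, a, hb, ha, hab.symm⟩
  loopless := by
    constructor
    rintro x ⟨hne, -⟩
    exact hne rfl

/-- The partition of the vertices induced by contracting a set `F` of edges of `G`. -/
def edgeSetoid (G : SimpleGraph V) (F : Set (Sym2 V)) : Setoid V :=
  Relation.EqvGen.setoid (fun a b => G.Adj a b ∧ s(a, b) ∈ F)

/-- The graph `G/F` obtained from `G` by contracting the edges in `F`. -/
def contractE (G : SimpleGraph V) (F : Set (Sym2 V)) :
    SimpleGraph (Quotient (edgeSetoid G F)) := contractQ G (edgeSetoid G F)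

/-- `G` contains an induced copy of `H`. -/
def HasInducedCopy (H : SimpleGraph W) (G : SimpleGraph V) : Prop :=
  ∃ f : W ↪ V, ∀ a b : W, H.Adj a b ↔ G.Adj (f a) (f b)

/-- `G` can be turned into an `H`-free graph by contracting at most `k` of its edges. -/
def ContractsToFree (G : SimpleGraph V) (k : ℕ) (H : SimpleGraph W) : Prop :=
  ∃ F : Finset (Sym2 V), ↑F ⊆ G.edgeSet ∧ F.card ≤ k ∧
    ¬ HasInducedCopy H (contractE G (↑F : Set (Sym2 V)))

/-- The cost of the partition given by a setoid: the sum over classes of (size - 1). -/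
noncomputable def setoidCost (s : Setoid V) : ℕ :=
  ∑ᶠ c : Quotient s, ({v : V | Quotient.mk s v = c}.ncard - 1)

namespace SimpleGraph

variable {H : SimpleGraph V} {u v : V}

theorem Reachable.exists_adj_dist_lt (h : H.Reachable u v) (hne : v ≠ u) :
    ∃ x, H.Adj v x ∧ H.dist u x < H.dist u v := by
  obtain ⟨p, hp⟩ := h.symm.exists_walk_length_eq_dist
  obtain ⟨x, hadj, q, rfl⟩ := Walk.exists_eq_cons_of_ne hne p
  refine ⟨x, hadj, ?_⟩
  have := H.dist_le q
  rw [dist_comm, H.dist_comm (u := u), ← hp, Walk.length_cons]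
  omega

/-- Each such `v` sends the first edge of a shortest path back to `u`; that edge determines `v`
as its endpoint farther from `u`. -/
theorem card_le_card_of_forall_reachable (F : Finset (Sym2 V)) (hF : H.edgeSet ⊆ F)
    {S : Finset V} (hS : ∀ v ∈ S, v ≠ u ∧ H.Reachable u v) : S.card ≤ F.card := by
  classical
  choose x hadj hlt using fun v (hv : v ∈ S) => (hS v hv).2.exists_adj_dist_lt (hS v hv).1
  refine Finset.card_le_card_of_injOn
    (fun v => if hv : v ∈ S then s(v, x v hv) else s(v, v)) (fun v hv => ?_) ?_
  · rw [Finset.mem_coe] at hv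
    simpa only [dif_pos hv] using hF (hadj v hv)
  · intro v hv v' hv' heq
    simp only [Finset.mem_coe] at hv hv'
    simp only [dif_pos hv, dif_pos hv', Sym2.eq_iff] at heq
    rcases heq with ⟨h, -⟩ | ⟨h, h'⟩
    · exact h
    · have h₁ := hlt v hv
      have h₂ := hlt v' hv'
      rw [h'] at h₁
      rw [← h] at h₂
      omega

theorem Reachable.mem_of_neighborSet_subset_insert {C : Set V} {a b : V}
    (hC : ∀ x ∈ C, H.neighborSet x ⊆ insert u C) (ha : a ∈ C) (hua : ¬H.Reachable u a)
    (hab : H.Reachable a b) : b ∈ C := by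
  obtain ⟨p⟩ := hab
  induction p with
  | nil => exact ha
  | cons hadj p ih =>
    refine ih ?_ fun h => hua (h.trans hadj.symm.reachable)
    rcases hC _ ha hadj with rfl | h
    · exact absurd hadj.symm.reachable hua
    · exact h

end SimpleGraph

open SimpleGraph Function

theorem edgeSetoid_mk_eq_iff {G : SimpleGraph V} {F : Set (Sym2 V)} (hF : F ⊆ G.edgeSet)
    (a b : V) :
    Quotient.mk (edgeSetoid G F) a = Quotient.mk (edgeSetoid G F) b ↔
      (fromEdgeSet F).Reachable a b := by
  have hrel : (fun a b => G.Adj a b ∧ s(a, b) ∈ F) = (fromEdgeSet F).Adj := by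
    ext a b
    exact ⟨fun h => ⟨h.2, h.1.ne⟩, fun h => ⟨hF h.1, h.1⟩⟩
  have : Std.Symm (fromEdgeSet F).Adj := ⟨fun _ _ h => h.symm⟩
  rw [Quotient.eq, reachable_iff_reflTransGen, ← Relation.EqvGen.eqvGen_eq_reflTransGen, ← hrel]
  rfl

theorem exists_induced_star_of_pendant_cliques {ι : Type*} {G : SimpleGraph V}
    {F : Finset (Sym2 V)} (hF : ↑F ⊆ G.edgeSet) {w : V} {C : ι → Finset V}
    (hdisj : Pairwise (Disjoint on C)) (hcard : ∀ i, F.card < (C i).card) (hw : ∀ i, w ∉ C i)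
    (hwadj : ∀ i, ∀ a ∈ C i, G.Adj w a)
    (hnbr : ∀ i, ∀ a ∈ C i, G.neighborSet a ⊆ insert w ↑(C i)) :
    ∃ (c : Quotient (edgeSetoid G ↑F)) (leaf : ι → Quotient (edgeSetoid G ↑F)),
      Injective leaf ∧ (∀ i, (contractE G ↑F).Adj c (leaf i)) ∧
        ∀ i j, ¬ (contractE G ↑F).Adj (leaf i) (leaf j) := by
  set H := fromEdgeSet (F : Set (Sym2 V))
  set mk := Quotient.mk (edgeSetoid G ↑F)
  have hHG : H ≤ G := (fromEdgeSet_le G).mpr (Set.sdiff_subset.trans hF)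
  have hHF : H.edgeSet ⊆ F := (edgeSet_fromEdgeSet _).trans_subset Set.sdiff_subset
  have hfar : ∀ i, ∃ a ∈ C i, ¬ H.Reachable w a := fun i => by
    by_contra! hnear
    exact (hcard i).not_ge <| card_le_card_of_forall_reachable F hHF fun a ha =>
      ⟨by rintro rfl; exact hw i ha, hnear a ha⟩
  choose a haC hwa using hfar
  have hclass : ∀ i b, mk b = mk (a i) → b ∈ C i ∧ ¬ H.Reachable w b := fun i b hb => by
    have hab : H.Reachable (a i) b := ((edgeSetoid_mk_eq_iff hF b (a i)).mp hb).symm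
    refine ⟨hab.mem_of_neighborSet_subset_insert (fun x hx => ?_) (haC i) (hwa i),
      fun h => hwa i (h.trans hab.symm)⟩
    exact (neighborSet_mono hHG x).trans (hnbr i x hx)
  refine ⟨mk w, fun i => mk (a i), fun i j hij => ?_, fun i => ?_, fun i j => ?_⟩
  · by_contra hne
    exact Finset.disjoint_left.mp (hdisj hne) (haC i) (hclass j _ hij).1
  · exact ⟨fun h => hwa i ((edgeSetoid_mk_eq_iff hF w (a i)).mp h), w, a i, rfl, rfl,
      hwadj i _ (haC i)⟩
  · rintro ⟨hne, x, y, hx, hy, hxy⟩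
    obtain ⟨hxC, -⟩ := hclass i x hx
    obtain ⟨hyC, hwy⟩ := hclass j y hy
    rcases hnbr i x hxC hxy with rfl | hyC'
    · exact hwy Reachable.rfl
    · obtain rfl | hij := eq_or_ne i j
      · exact hne rfl
      · exact Finset.disjoint_left.mp (hdisj hij) hyC' hyC

theorem contract_contains_star_general {V : Type*} (G : SimpleGraph V) (t k : ℕ)
    (w : V) (C : Fin (t + 1) → Finset V)
    (hdisj : ∀ i j, i ≠ j → Disjoint (C i) (C j))
    (hcard : ∀ i, (C i).card = k + 1)
    (hw : ∀ i, w ∉ C i)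
    (hwadj : ∀ i, ∀ a ∈ C i, G.Adj w a)
    (hnbr : ∀ i, ∀ a ∈ C i, ∀ u : V, G.Adj a u → u = w ∨ u ∈ C i) :
    ∀ F : Finset (Sym2 V), ↑F ⊆ G.edgeSet → F.card ≤ k →
      ∃ (c : Quotient (edgeSetoid G (↑F : Set (Sym2 V))))
        (L : Finset (Quotient (edgeSetoid G (↑F : Set (Sym2 V))))),
        L.card = t ∧ c ∉ L ∧
        (∀ l ∈ L, (contractE G (↑F : Set (Sym2 V))).Adj c l) ∧
        ∀ l₁ ∈ L, ∀ l₂ ∈ L, l₁ ≠ l₂ → ¬ (contractE G (↑F : Set (Sym2 V))).Adj l₁ l₂ := by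
  intro F hF hFk
  classical
  obtain ⟨c, leaf, hinj, hadj, hindep⟩ :=
    exists_induced_star_of_pendant_cliques hF (C := fun j : Fin t => C j.castSucc)
      (fun i j hij => hdisj _ _ ((Fin.castSucc_injective t).ne hij))
      (fun j => by rw [hcard]; omega)
      (fun j => hw _) (fun j => hwadj _) (fun j a ha u hu => hnbr _ a ha u hu)
  refine ⟨c, Finset.univ.image leaf, ?_, ?_, ?_, ?_⟩
  · rw [Finset.card_image_of_injective _ hinj, Finset.card_fin]
  · rw [Finset.mem_image]
    rintro ⟨j, -, rfl⟩
    exact (hadj j).ne rfl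
  · simpa using hadj
  · simpa using fun i j _ => hindep i j

/-- If `G` contains an induced `K_{1,t,k+1}` (a vertex `w` adjacent to all
vertices of `t+1` disjoint cliques of size `k+1`, with no edges between distinct cliques),
where the only neighbors of the clique vertices are `w` and their own clique, then for
every set `F` of at most `k` edges of `G`, the graph `G/F` contains an induced `K_{1,t}`. -/
theorem contract_contains_star {V : Type*} (G : SimpleGraph V) (t k : ℕ) (ht : 2 ≤ t)
    (w : V) (C : Fin (t + 1) → Finset V)
    (hdisj : ∀ i j, i ≠ j → Disjoint (C i) (C j))
    (hcard : ∀ i, (C i).card = k + 1)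
    (hw : ∀ i, w ∉ C i)
    (hclique : ∀ i, ∀ a ∈ C i, ∀ b ∈ C i, a ≠ b → G.Adj a b)
    (hwadj : ∀ i, ∀ a ∈ C i, G.Adj w a)
    (hnbr : ∀ i, ∀ a ∈ C i, ∀ u : V, G.Adj a u → u = w ∨ u ∈ C i) :
    ∀ F : Finset (Sym2 V), ↑F ⊆ G.edgeSet → F.card ≤ k →
      ∃ (c : Quotient (edgeSetoid G (↑F : Set (Sym2 V))))
        (L : Finset (Quotient (edgeSetoid G (↑F : Set (Sym2 V))))),
        L.card = t ∧ c ∉ L ∧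
        (∀ l ∈ L, (contractE G (↑F : Set (Sym2 V))).Adj c l) ∧
        ∀ l₁ ∈ L, ∀ l₂ ∈ L, l₁ ≠ l₂ → ¬ (contractE G (↑F : Set (Sym2 V))).Adj l₁ l₂ :=
  contract_contains_star_general G t k w C hdisj hcard hw hwadj hnbr
end

section
/- Let G' be a graph with a dominating set D of size d. In the graph G obtained from G' via Eppstein's construction (upper clique U of size d, independent middle set M of size n with U complete to M, lower cliques L_1,...,L_n each of size n+1 forming one big clique L, and m_i complete to L_j iff v_i dominates v_j in G'), if G' has d pairwise disjoint dominating sets, then there is a partition P of V(G) into connected parts such that G/P is a complete graph on n(n+1)+d vertices. -/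
variable {V W : Type*}

/-- Vertex set of Eppstein's construction: upper clique `U = Fin d`, middle independent
set `M = Fin n`, lower clique `L = Fin n × Fin (n+1)` (split into cliques `L_j`). -/
abbrev EppV (n d : ℕ) := Fin d ⊕ (Fin n ⊕ (Fin n × Fin (n + 1)))

/-- Eppstein's construction from a graph `G'` on `Fin n`: `U` is a clique complete to the
independent set `M`; `L` is a clique; `m_i` is complete to `L_j` iff `v_i` dominates
`v_j`; there are no `U`–`L` edges. -/
def eppstein {n : ℕ} (G' : SimpleGraph (Fin n)) (d : ℕ) : SimpleGraph (EppV n d) :=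
  SimpleGraph.fromRel (fun x y =>
    match x, y with
    | Sum.inl _, Sum.inl _ => True
    | Sum.inl _, Sum.inr (Sum.inl _) => True
    | Sum.inr (Sum.inl i), Sum.inr (Sum.inr (j, _)) => i = j ∨ G'.Adj i j
    | Sum.inr (Sum.inr _), Sum.inr (Sum.inr _) => True
    | _, _ => False)

/-!
Contract each vertex `u_m` of the upper clique together with the middle vertices of the
dominating set `D m`, and every remaining middle vertex `m_i` into the lower vertex
`(i, 0)`; all other vertices form singleton parts. Each part is a star, so it is connected.
Two upper parts touch through the clique `U`, two lower parts through the clique `L`, and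
the part of `u_m` reaches every `L_j` because `D m` dominates `v_j`.
-/

namespace SimpleGraph

lemma induce_connected_of_adj_center {G : SimpleGraph V} {S : Set V} {c : V} (hc : c ∈ S)
    (hadj : ∀ u ∈ S, u = c ∨ G.Adj u c) : (G.induce S).Connected := by
  have to_center : ∀ u : S, (G.induce S).Reachable u ⟨c, hc⟩ := by
    rintro ⟨u, hu⟩
    rcases hadj u hu with rfl | huc
    · rfl
    · exact Adj.reachable (G := G.induce S) huc
  exact (connected_iff _).2 ⟨fun u w => (to_center u).trans (to_center w).symm, ⟨⟨c, hc⟩⟩⟩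

variable {G : SimpleGraph V} {f : V → W}

lemma induce_ker_connected_of_section {c : W → V} (hfc : ∀ w, f (c w) = w)
    (hstar : ∀ v, v = c (f v) ∨ G.Adj v (c (f v))) (v : V) :
    (G.induce {u | (Setoid.ker f).r u v}).Connected :=
  induce_connected_of_adj_center (c := c (f v)) (hfc (f v)) fun u (hu : f u = f v) =>
    hu ▸ hstar u

lemma contractQ_ker_adj (hadj : ∀ w w', w ≠ w' → ∃ a b, f a = w ∧ f b = w' ∧ G.Adj a b)
    {x y : Quotient (Setoid.ker f)} (hxy : x ≠ y) : (contractQ G (Setoid.ker f)).Adj x y := by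
  refine ⟨hxy, ?_⟩
  induction x, y using Quotient.inductionOn₂ with
  | h u w =>
    obtain ⟨a, b, ha, hb, hab⟩ := hadj (f u) (f w) fun h => hxy (Quotient.sound h)
    exact ⟨a, b, Quotient.sound ha, Quotient.sound hb, hab⟩

end SimpleGraph

section Eppstein

variable {n d : ℕ} {G' : SimpleGraph (Fin n)}

@[simp] lemma eppstein_adj_upper_upper {a b : Fin d} :
    (eppstein G' d).Adj (.inl a) (.inl b) ↔ a ≠ b := by
  simp [eppstein]

@[simp] lemma eppstein_adj_upper_middle {a : Fin d} {i : Fin n} :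
    (eppstein G' d).Adj (.inl a) (.inr (.inl i)) := by
  simp [eppstein]

@[simp] lemma eppstein_adj_middle_lower {i : Fin n} {p : Fin n × Fin (n + 1)} :
    (eppstein G' d).Adj (.inr (.inl i)) (.inr (.inr p)) ↔ i = p.1 ∨ G'.Adj i p.1 := by
  simp [eppstein]

@[simp] lemma eppstein_adj_lower_lower {p q : Fin n × Fin (n + 1)} :
    (eppstein G' d).Adj (.inr (.inr p)) (.inr (.inr q)) ↔ p ≠ q := by
  simp [eppstein]

def eppsteinCenter : Fin d ⊕ (Fin n × Fin (n + 1)) → EppV n d :=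
  Sum.elim .inl (.inr ∘ .inr)

variable (D : Fin d → Finset (Fin n))

/-- The part of the contraction containing a vertex: `Sum.inl m` is the part of `u_m`,
`Sum.inr p` that of the lower vertex `p`. -/
noncomputable def eppsteinPart : EppV n d → Fin d ⊕ (Fin n × Fin (n + 1))
  | .inl m => .inl m
  | .inr (.inl i) => if h : ∃ m, i ∈ D m then .inl h.choose else .inr (i, 0)
  | .inr (.inr p) => .inr p

lemma eppsteinPart_center (w : Fin d ⊕ (Fin n × Fin (n + 1))) :
    eppsteinPart D (eppsteinCenter w) = w := by
  cases w <;> rfl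

lemma eppsteinPart_middle_of_mem (hdisj : ∀ i j, i ≠ j → Disjoint (D i) (D j)) {i : Fin n}
    {m : Fin d} (hi : i ∈ D m) : eppsteinPart D (.inr (.inl i)) = .inl m := by
  have hex : ∃ m', i ∈ D m' := ⟨m, hi⟩
  have hchoose : hex.choose = m := by
    by_contra hne
    exact Finset.disjoint_left.1 (hdisj _ _ hne) hex.choose_spec hi
  simp only [eppsteinPart, dif_pos hex, hchoose]

lemma eq_or_adj_eppsteinCenter (v : EppV n d) :
    v = eppsteinCenter (eppsteinPart D v) ∨
      (eppstein G' d).Adj v (eppsteinCenter (eppsteinPart D v)) := by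
  rcases v with m | i | p
  · exact .inl rfl
  · right
    simp only [eppsteinPart]
    split_ifs
    · exact eppstein_adj_upper_middle.symm
    · simp [eppsteinCenter]
  · exact .inl rfl

lemma exists_eppstein_adj_eppsteinPart (hdisj : ∀ i j, i ≠ j → Disjoint (D i) (D j))
    (hdom : ∀ m : Fin d, ∀ j : Fin n, ∃ i ∈ D m, i = j ∨ G'.Adj i j)
    (w w' : Fin d ⊕ (Fin n × Fin (n + 1))) (hww' : w ≠ w') :
    ∃ a b, eppsteinPart D a = w ∧ eppsteinPart D b = w' ∧ (eppstein G' d).Adj a b := by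
  have upper_lower : ∀ m q, ∃ a b, eppsteinPart D a = .inl m ∧ eppsteinPart D b = .inr q ∧
      (eppstein G' d).Adj a b := fun m q => by
    obtain ⟨i, hi, hiq⟩ := hdom m q.1
    exact ⟨_, _, eppsteinPart_middle_of_mem D hdisj hi, rfl, eppstein_adj_middle_lower.2 hiq⟩
  rcases w with m | p <;> rcases w' with m' | q
  · exact ⟨.inl m, .inl m', rfl, rfl, by simpa using hww'⟩
  · exact upper_lower m q
  · obtain ⟨a, b, ha, hb, hab⟩ := upper_lower m' p
    exact ⟨b, a, hb, ha, hab.symm⟩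
  · exact ⟨.inr (.inr p), .inr (.inr q), rfl, rfl, by simpa using hww'⟩

end Eppstein

theorem eppstein_contracts_to_complete_general {n d : ℕ}
    (G' : SimpleGraph (Fin n))
    (D : Fin d → Finset (Fin n))
    (hdisj : ∀ i j, i ≠ j → Disjoint (D i) (D j))
    (hdom : ∀ m : Fin d, ∀ j : Fin n, ∃ i ∈ D m, i = j ∨ G'.Adj i j) :
    ∃ s : Setoid (EppV n d),
      (∀ v : EppV n d, ((eppstein G' d).induce {u | s.r u v}).Connected) ∧
      Nat.card (Quotient s) = n * (n + 1) + d ∧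
      ∀ x y : Quotient s, x ≠ y → (contractQ (eppstein G' d) s).Adj x y := by
  refine ⟨Setoid.ker (eppsteinPart D), ?_, ?_, ?_⟩
  · exact SimpleGraph.induce_ker_connected_of_section (eppsteinPart_center D)
      (eq_or_adj_eppsteinCenter D)
  · rw [Nat.card_congr
      (Setoid.quotientKerEquivOfRightInverse _ eppsteinCenter (eppsteinPart_center D))]
    simp [add_comm]
  · exact fun x y hxy =>
      SimpleGraph.contractQ_ker_adj (exists_eppstein_adj_eppsteinPart D hdisj hdom) hxy

/-- If `G'` (on `n ≥ 2` vertices, with no universal vertex) has `d` pairwise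
disjoint dominating sets, then the graph `G` of Eppstein's construction admits a partition
`P` of its vertices into connected parts such that `G/P` is a complete graph on
`n(n+1) + d` vertices. -/
theorem eppstein_contracts_to_complete {n d : ℕ} (hn : 2 ≤ n)
    (G' : SimpleGraph (Fin n))
    (hnouniv : ∀ i : Fin n, ∃ j : Fin n, j ≠ i ∧ ¬ G'.Adj i j)
    (D : Fin d → Finset (Fin n))
    (hdisj : ∀ i j, i ≠ j → Disjoint (D i) (D j))
    (hdom : ∀ m : Fin d, ∀ j : Fin n, ∃ i ∈ D m, i = j ∨ G'.Adj i j) :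
    ∃ s : Setoid (EppV n d),
      (∀ v : EppV n d, ((eppstein G' d).induce {u | s.r u v}).Connected) ∧
      Nat.card (Quotient s) = n * (n + 1) + d ∧
      ∀ x y : Quotient s, x ≠ y → (contractQ (eppstein G' d) s).Adj x y :=
  eppstein_contracts_to_complete_general G' D hdisj hdom
end

section
/- Let G' be a graph and G = G' + K_1 the disjoint union of G' with a single isolated vertex. Let H be a graph with an isolated vertex v, and H' = H − v. Then for every k, G' can be made H'-free by at most k edge contractions if and only if G can be made H-free by at most k edge contractions. -/
/-!
Contracting edges of `G' + K₁` never involves the isolated vertex: for every set `F` of edges of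
`G'` the contraction classes of `G' + K₁` along `F` are those of `G'` plus the singleton of the
new vertex, so `(G' + K₁)/F ≃g G'/F + K₁`, and every edge set of `G' + K₁` is such an `F`.
It remains to see that `H ⊴ Γ + K₁` iff `H - v ⊴ Γ`. An induced copy of `H` in `Γ + K₁` can
only use the new vertex for an isolated vertex `u` of `H`; swapping `u` and `v` is an
automorphism of `H`, after which `H - v` lands in `Γ`.
-/

variable {V W : Type*}

open Relation in
theorem Relation.eqvGen_liftRel_iff {α β : Type*} {r : α → α → Prop} {s : β → β → Prop}
    {x y : α ⊕ β} :
    EqvGen (Sum.LiftRel r s) x y ↔ Sum.LiftRel (EqvGen r) (EqvGen s) x y := by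
  constructor
  · intro h
    induction h with
    | rel x y h => exact h.mono (fun _ _ => .rel _ _) (fun _ _ => .rel _ _)
    | refl x => cases x <;> constructor <;> exact .refl _
    | symm x y _ ih => cases ih <;> constructor <;> exact .symm _ _ ‹_›
    | trans x y z _ _ ih₁ ih₂ =>
      cases ih₁ <;> cases ih₂ <;> constructor <;> exact .trans _ _ _ ‹_› ‹_›
  · rintro (⟨h⟩ | ⟨h⟩) <;> induction h with
    | rel a b h => exact .rel _ _ (by constructor; exact h)
    | refl => exact .refl _
    | symm _ _ _ ih => exact .symm _ _ ih
    | trans _ _ _ _ _ ih₁ ih₂ => exact .trans _ _ _ ih₁ ih₂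

theorem Relation.eqvGen_bot {α : Type*} : Relation.EqvGen (⊥ : α → α → Prop) = Eq :=
  funext₂ fun _ _ => propext
    ⟨fun h => Relation.EqvGen.eqvGen_le (fun _ _ h => h.elim) _ _ h, fun h => h ▸ .refl _⟩

namespace SimpleGraph

variable {ι : Type*}

theorem hasInducedCopy_iff_isIndContained {H : SimpleGraph W} {G : SimpleGraph V} :
    HasInducedCopy H G ↔ H.IsIndContained G :=
  ⟨fun ⟨f, hf⟩ => ⟨⟨f, (hf _ _).symm⟩⟩, fun ⟨f⟩ => ⟨f.toEmbedding, fun _ _ => f.map_adj_iff.symm⟩⟩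

theorem isIndContained_congr_right {H : SimpleGraph W} {G : SimpleGraph V} {G₂ : SimpleGraph ι}
    (e : G ≃g G₂) : H.IsIndContained G ↔ H.IsIndContained G₂ :=
  ⟨fun h => h.trans e.isIndContained, fun h => h.trans e.isIndContained'⟩

def Iso.swapOfIsolated [DecidableEq W] {H : SimpleGraph W} {u v : W} (hu : ∀ w, ¬ H.Adj u w)
    (hv : ∀ w, ¬ H.Adj v w) : H ≃g H where
  toEquiv := Equiv.swap u v
  map_rel_iff' {a b} := by
    simp only [Equiv.swap_apply_def]
    split_ifs <;> simp_all [H.adj_comm]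

theorem Embedding.induce_isIndContained_of_isLeft {H : SimpleGraph W} {G : SimpleGraph V}
    {G₂ : SimpleGraph ι} (f : H ↪g G ⊕g G₂) {s : Set W} (hs : ∀ w ∈ s, (f w).isLeft) :
    (H.induce s).IsIndContained G := by
  choose g hg using fun w : s => Sum.isLeft_iff.1 (hs w w.2)
  refine ⟨⟨⟨g, fun a b hab => Subtype.ext (f.injective ?_)⟩, ?_⟩⟩
  · rw [hg, hg, hab]
  · intro a b
    simp only [comap_adj, Function.Embedding.subtype_apply]
    rw [← f.map_adj_iff, hg, hg, sum_adj_inl]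
    rfl

theorem sum_bot_eq_map (G : SimpleGraph V) :
    G ⊕g (⊥ : SimpleGraph ι) = G.map Function.Embedding.inl := by
  ext (a | i) (b | j) <;> simp

theorem edgeSet_sum_bot (G : SimpleGraph V) :
    (G ⊕g (⊥ : SimpleGraph ι)).edgeSet = Sym2.map Sum.inl '' G.edgeSet := by
  rw [sum_bot_eq_map, edgeSet_map]
  rfl

theorem not_sum_bot_adj_inr (G : SimpleGraph V) (i : ι) (x : V ⊕ ι) :
    ¬ (G ⊕g (⊥ : SimpleGraph ι)).Adj (Sum.inr i) x := by
  cases x <;> simp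

theorem isIndContained_sum_bot_iff [Unique ι] {H : SimpleGraph W} {v : W}
    (hv : ∀ u, ¬ H.Adj v u) (G : SimpleGraph V) :
    H.IsIndContained (G ⊕g (⊥ : SimpleGraph ι)) ↔ (H.induce {u | u ≠ v}).IsIndContained G := by
  classical
  constructor
  · rintro ⟨f⟩
    obtain ⟨u, hu, hleft⟩ : ∃ u, (∀ w, ¬ H.Adj u w) ∧ ∀ w ≠ u, (f w).isLeft := by
      by_cases h : ∃ u, ¬ (f u).isLeft
      · obtain ⟨u, hu⟩ := h
        obtain ⟨i, hi⟩ := Sum.isRight_iff.1 (Sum.not_isLeft.1 hu)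
        refine ⟨u, fun w huw => not_sum_bot_adj_inr G i (f w) (hi ▸ f.map_adj_iff.2 huw), ?_⟩
        intro w hwu
        by_contra hw
        obtain ⟨j, hj⟩ := Sum.isRight_iff.1 (Sum.not_isLeft.1 hw)
        exact hwu (f.injective (by rw [hi, hj, Subsingleton.elim i j]))
      · push Not at h
        exact ⟨v, hv, fun w _ => h w⟩
    refine (f.comp (Iso.swapOfIsolated hu hv).toEmbedding).induce_isIndContained_of_isLeft ?_
    intro w hw
    exact hleft _ fun h => hw <|
      Equiv.swap_apply_eq_iff.1 (h : Equiv.swap u v w = u) |>.trans (Equiv.swap_apply_left u v)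
  · rintro ⟨f⟩
    refine ⟨⟨⟨fun u => if h : u = v then Sum.inr default else Sum.inl (f ⟨u, h⟩), ?_⟩, ?_⟩⟩
    · intro a b hab
      by_cases ha : a = v <;> by_cases hb : b = v <;> simp_all
    · intro a b
      by_cases ha : a = v <;> by_cases hb : b = v
      all_goals simp [ha, hb, hv, fun u => mt H.adj_symm (hv u)]

section Contraction

variable (G : SimpleGraph V) (F : Set (Sym2 V))

theorem sum_bot_adj_and_mem_image_iff (x y : V ⊕ ι) :
    ((G ⊕g (⊥ : SimpleGraph ι)).Adj x y ∧ s(x, y) ∈ Sym2.map Sum.inl '' F) ↔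
      Sum.LiftRel (fun a b => G.Adj a b ∧ s(a, b) ∈ F) ⊥ x y := by
  rcases x with a | i <;> rcases y with b | j
  · rw [← Sym2.map_mk, (Sym2.map.injective Sum.inl_injective).mem_set_image]
    simp
  all_goals simp

theorem edgeSetoid_sum_bot_iff (x y : V ⊕ ι) :
    edgeSetoid (G ⊕g (⊥ : SimpleGraph ι)) (Sym2.map Sum.inl '' F) x y ↔
      Sum.LiftRel (edgeSetoid G F) Eq x y := by
  change Relation.EqvGen _ x y ↔ Sum.LiftRel (Relation.EqvGen _) Eq x y
  simp only [sum_bot_adj_and_mem_image_iff, Relation.eqvGen_liftRel_iff, Relation.eqvGen_bot]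

def contractESumBotIso :
    contractE (G ⊕g (⊥ : SimpleGraph ι)) (Sym2.map Sum.inl '' F) ≃g
      contractE G F ⊕g (⊥ : SimpleGraph ι) where
  toFun := Quotient.lift (Sum.map (Quotient.mk _) id) fun x y h => by
    rcases (edgeSetoid_sum_bot_iff G F x y).1 h with hr | rfl
    · exact congrArg Sum.inl (Quotient.sound hr)
    · rfl
  invFun := Sum.elim
    (Quotient.map Sum.inl fun a b h => (edgeSetoid_sum_bot_iff G F _ _).2 (.inl h))
    (fun i => Quotient.mk _ (Sum.inr i))
  left_inv x := by
    induction x using Quotient.ind with | _ x => rcases x with a | i <;> rfl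
  right_inv := by
    rintro (x | i)
    · induction x using Quotient.ind; rfl
    · rfl
  map_rel_iff' {x y} := by
    induction x using Quotient.ind with | _ x =>
    induction y using Quotient.ind with | _ y =>
    rcases x with a | i <;> rcases y with b | j
    all_goals simp [contractE, contractQ, Quotient.eq, edgeSetoid_sum_bot_iff, Sum.exists]

variable [Unique ι] {H : SimpleGraph W} {v : W}

theorem hasInducedCopy_contractE_sum_bot_iff (hv : ∀ u, ¬ H.Adj v u) :
    HasInducedCopy H (contractE (G ⊕g (⊥ : SimpleGraph ι)) (Sym2.map Sum.inl '' F)) ↔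
      HasInducedCopy (H.induce {u | u ≠ v}) (contractE G F) := by
  rw [hasInducedCopy_iff_isIndContained, hasInducedCopy_iff_isIndContained,
    isIndContained_congr_right (contractESumBotIso G F), isIndContained_sum_bot_iff hv]

theorem contractsToFree_sum_bot_iff (hv : ∀ u, ¬ H.Adj v u) (k : ℕ) :
    ContractsToFree (G ⊕g (⊥ : SimpleGraph ι)) k H ↔
      ContractsToFree G k (H.induce {u | u ≠ v}) := by
  classical
  constructor
  · rintro ⟨F, hF, hcard, hfree⟩
    rw [edgeSet_sum_bot, Finset.subset_set_image_iff] at hF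
    obtain ⟨F₀, hF₀, rfl⟩ := hF
    rw [Finset.card_image_of_injective F₀ (Sym2.map.injective Sum.inl_injective)] at hcard
    rw [Finset.coe_image, hasInducedCopy_contractE_sum_bot_iff G F₀ hv] at hfree
    exact ⟨F₀, hF₀, hcard, hfree⟩
  · rintro ⟨F₀, hF₀, hcard, hfree⟩
    refine ⟨F₀.image (Sym2.map Sum.inl), ?_, Finset.card_image_le.trans hcard, ?_⟩
    · rw [Finset.coe_image, edgeSet_sum_bot]
      exact Set.image_mono hF₀
    · rwa [Finset.coe_image, hasInducedCopy_contractE_sum_bot_iff G F₀ hv]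

end Contraction

end SimpleGraph

/-- If `H` has an isolated vertex `v` and `H' = H - v`, then for every `k`,
`G'` can be made `H'`-free by at most `k` edge contractions iff `G' + K_1` can be made
`H`-free by at most `k` edge contractions. -/
theorem disjoint_union_K1_iff {V W : Type*} (G' : SimpleGraph V)
    (H : SimpleGraph W) (v : W) (hv : ∀ u : W, ¬ H.Adj v u) (k : ℕ) :
    ContractsToFree G' k (H.induce {u : W | u ≠ v}) ↔
      ContractsToFree (G'.sum (⊥ : SimpleGraph (Fin 1))) k H :=
  (SimpleGraph.contractsToFree_sum_bot_iff G' hv k).symm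
end

section
/- Let t ≥ 3, and let G = G' + K_{k+2} be the disjoint union of a graph G' with a complete graph on k+2 vertices. Then G' can be made (t−1)K_2-free by at most k edge contractions if and only if G can be made tK_2-free by at most k edge contractions. -/
variable {V W : Type*}

/-- The graph `tK_2`: the disjoint union of `t` edges. -/
def tK2 (t : ℕ) : SimpleGraph (Fin t × Fin 2) where
  Adj p q := p.1 = q.1 ∧ p.2 ≠ q.2
  symm := by constructor; rintro p q ⟨h1, h2⟩; exact ⟨h1.symm, h2.symm⟩
  loopless := by constructor; rintro p ⟨-, h⟩; exact h rfl

/-!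
Contracting edges never merges vertices of different summands, so `(G' + K_{k+2}) / F` is
`G' / F₁ + K_{k+2} / F₂`, where `F₁`, `F₂` are the parts of `F` in the two summands. The second
summand is again complete, and since at most `k` edges were contracted it keeps at least two
vertices. An induced `tK_2` in such a sum uses at most one edge of the complete part, because two
of them would be joined, so the remaining `t - 1` edges form an induced `(t-1)K_2` in
`G' / F₁`; conversely, any edge of the complete part extends an induced `(t-1)K_2` of `G' / F₁`.
-/

section

open SimpleGraph

variable {U : Type*}

theorem hasInducedCopy_iff_nonempty_embedding (H : SimpleGraph W) (G : SimpleGraph V) :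
    HasInducedCopy H G ↔ Nonempty (H ↪g G) :=
  ⟨fun ⟨f, hf⟩ => ⟨⟨f, (hf _ _).symm⟩⟩,
    fun ⟨φ⟩ => ⟨φ.toEmbedding, fun _ _ => φ.map_rel_iff.symm⟩⟩

theorem hasInducedCopy_of_isEmpty [IsEmpty W] (H : SimpleGraph W) (G : SimpleGraph V) :
    HasInducedCopy H G :=
  ⟨⟨isEmptyElim, fun a => isEmptyElim a⟩, fun a => isEmptyElim a⟩

theorem SimpleGraph.Iso.hasInducedCopy_iff {G : SimpleGraph V} {G' : SimpleGraph U}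
    (e : G ≃g G') (H : SimpleGraph W) : HasInducedCopy H G ↔ HasInducedCopy H G' := by
  simp only [hasInducedCopy_iff_nonempty_embedding]
  exact ⟨fun ⟨φ⟩ => ⟨φ.trans e.toEmbedding⟩, fun ⟨φ⟩ => ⟨φ.trans e.symm.toEmbedding⟩⟩

theorem SimpleGraph.Adj.sum_isLeft_eq {G : SimpleGraph V} {H : SimpleGraph W} {x y : V ⊕ W}
    (h : (G ⊕g H).Adj x y) : x.isLeft = y.isLeft := by
  cases x <;> cases y <;> simp_all

theorem SimpleGraph.Embedding.nonempty_of_forall_isLeft {H : SimpleGraph U}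
    {G : SimpleGraph V} {G' : SimpleGraph W} (φ : H ↪g G ⊕g G') (hφ : ∀ x, (φ x).isLeft) :
    Nonempty (H ↪g G) := by
  choose g hg using fun x => Sum.isLeft_iff.mp (hφ x)
  refine ⟨⟨⟨g, fun x y hxy => φ.injective ?_⟩, fun {x y} => ?_⟩⟩
  · rw [hg x, hg y, hxy]
  · change G.Adj (g x) (g y) ↔ _
    simpa [hg x, hg y] using φ.map_rel_iff (a := x) (b := y)

def tK2AddIso (m n : ℕ) : tK2 m ⊕g tK2 n ≃g tK2 (m + n) where
  toEquiv :=
    (Equiv.sumProdDistrib _ _ _).symm.trans (Equiv.prodCongr finSumFinEquiv (Equiv.refl _))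
  map_rel_iff' := by
    rintro (⟨i, j⟩ | ⟨i, j⟩) (⟨i', j'⟩ | ⟨i', j'⟩) <;> simp [tK2, Fin.ext_iff] <;> omega

def tK2SuccAboveEmbedding {s : ℕ} (i₀ : Fin (s + 1)) : tK2 s ↪g tK2 (s + 1) where
  toFun := Prod.map i₀.succAbove id
  inj' := Fin.succAbove_right_injective.prodMap Function.injective_id
  map_rel_iff' := by simp [tK2]

theorem nonempty_tK2_one_embedding_top [Nontrivial W] :
    Nonempty (tK2 1 ↪g (⊤ : SimpleGraph W)) := by
  obtain ⟨c, d, hcd⟩ := exists_pair_ne W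
  have hv : Function.Injective ![c, d] := by
    intro i j h; fin_cases i <;> fin_cases j <;> simp_all [eq_comm]
  exact ⟨⟨⟨fun p => ![c, d] p.2, fun p q h => Prod.ext (Subsingleton.elim _ _) (hv h)⟩,
    by simp [tK2]⟩⟩

theorem exists_forall_ne_isLeft_of_tK2_embedding {A : SimpleGraph U} {s : ℕ}
    (φ : tK2 (s + 1) ↪g A ⊕g (⊤ : SimpleGraph W)) :
    ∃ i₀, ∀ i ≠ i₀, ∀ j, (φ (i, j)).isLeft := by
  have same_side (i : Fin (s + 1)) (j : Fin 2) : (φ (i, j)).isLeft = (φ (i, 0)).isLeft := by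
    obtain rfl | hj := eq_or_ne j 0
    · rfl
    · exact ((φ.map_rel_iff (a := (i, j)) (b := (i, 0))).mpr ⟨rfl, hj⟩).sum_isLeft_eq
  have right_unique (i i' : Fin (s + 1)) (hi : (φ (i, 0)).isRight) (hi' : (φ (i', 0)).isRight) :
      i = i' := by
    by_contra hne
    obtain ⟨c, hc⟩ := Sum.isRight_iff.mp hi
    obtain ⟨c', hc'⟩ := Sum.isRight_iff.mp hi'
    have hcc' : c ≠ c' := by
      rintro rfl
      exact hne (congrArg Prod.fst (φ.injective (hc.trans hc'.symm)))
    have hadj : (A ⊕g ⊤).Adj (φ (i, 0)) (φ (i', 0)) := by simpa [hc, hc'] using hcc'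
    exact hne (φ.map_rel_iff.mp hadj).1
  by_cases h : ∃ i₀, (φ (i₀, 0)).isRight
  · obtain ⟨i₀, hi₀⟩ := h
    refine ⟨i₀, fun i hi j => ?_⟩
    rw [same_side]
    by_contra hl
    exact hi (right_unique _ _ (by simpa using hl) hi₀)
  · push Not at h
    exact ⟨0, fun i _ j => by simpa [same_side] using h i⟩

theorem hasInducedCopy_tK2_succ_sum_top_iff [Nontrivial W] (A : SimpleGraph U) (s : ℕ) :
    HasInducedCopy (tK2 (s + 1)) (A ⊕g (⊤ : SimpleGraph W)) ↔ HasInducedCopy (tK2 s) A := by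
  simp only [hasInducedCopy_iff_nonempty_embedding]
  constructor
  · rintro ⟨φ⟩
    obtain ⟨i₀, hi₀⟩ := exists_forall_ne_isLeft_of_tK2_embedding φ
    exact Embedding.nonempty_of_forall_isLeft ((tK2SuccAboveEmbedding i₀).trans φ)
      fun p => hi₀ _ (Fin.succAbove_ne i₀ p.1) p.2
  · rintro ⟨φ⟩
    obtain ⟨ψ⟩ := nonempty_tK2_one_embedding_top (W := W)
    exact ⟨(tK2AddIso s 1).symm.toEmbedding.trans (φ.sum ψ)⟩

section Contraction

open Sum

variable {G : SimpleGraph V} {F : Set (Sym2 V)}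

theorem edgeSetoid_le {s : Setoid V} (h : ∀ a b, G.Adj a b → s(a, b) ∈ F → s a b) :
    edgeSetoid G F ≤ s :=
  Setoid.eqvGen_le fun a b hab => h a b hab.1 hab.2

theorem edgeSetoid_le_reachableSetoid :
    edgeSetoid G F ≤ (G ⊓ fromEdgeSet F).reachableSetoid :=
  edgeSetoid_le fun _ _ hab hF => Adj.reachable ⟨hab, hF, hab.ne⟩

theorem contractE_top (F : Set (Sym2 W)) : contractE (⊤ : SimpleGraph W) F = ⊤ := by
  ext X Y
  refine ⟨fun h => h.1, fun hXY => ⟨hXY, ?_⟩⟩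
  induction X using Quotient.ind
  induction Y using Quotient.ind
  exact ⟨_, _, rfl, rfl, fun h => hXY (congrArg _ h)⟩

theorem nontrivial_quotient_edgeSetoid [Fintype V] (G : SimpleGraph V) (F : Finset (Sym2 V))
    (hF : F.card + 2 ≤ Fintype.card V) : Nontrivial (Quotient (edgeSetoid G F)) := by
  have hdisc : ¬ (G ⊓ fromEdgeSet F).Connected := fun hconn => by
    have hcard := hconn.card_vert_le_card_edgeSet_add_one
    have hedges : Nat.card (G ⊓ fromEdgeSet F).edgeSet ≤ F.card := by
      have hsub : (G ⊓ fromEdgeSet F).edgeSet ⊆ F := by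
        simp only [edgeSet_inf, edgeSet_fromEdgeSet]
        exact Set.inter_subset_right.trans Set.sdiff_subset
      simpa using Nat.card_mono F.finite_toSet hsub
    rw [Nat.card_eq_fintype_card] at hcard
    omega
  have : Nonempty V := Fintype.card_pos_iff.mp (by omega)
  obtain ⟨a, b, hab⟩ : ∃ a b, ¬ (G ⊓ fromEdgeSet F).Reachable a b := by
    simpa [connected_iff, Preconnected] using hdisc
  exact ⟨⟨_, _, fun h => hab (edgeSetoid_le_reachableSetoid (Quotient.exact h))⟩⟩

variable {H : SimpleGraph W}

theorem edgeSetoid_le_comap {V' : Type*} {G' : SimpleGraph V'} (f : G →g G')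
    (F' : Set (Sym2 V')) : edgeSetoid G (Sym2.map f ⁻¹' F') ≤ (edgeSetoid G' F').comap f :=
  edgeSetoid_le fun _ _ hab hF => .rel _ _ ⟨f.map_adj hab, hF⟩

theorem edgeSetoid_sum_le_ker (F : Set (Sym2 (V ⊕ W))) :
    edgeSetoid (G ⊕g H) F ≤ Setoid.ker
      (Sum.map (⟦·⟧ : V → Quotient (edgeSetoid G (Sym2.map inl ⁻¹' F)))
        (⟦·⟧ : W → Quotient (edgeSetoid H (Sym2.map inr ⁻¹' F)))) := by
  refine edgeSetoid_le ?_
  rintro (a | a) (b | b) hab hF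
  · exact congrArg inl (Quotient.sound (.rel _ _ ⟨by simpa using hab, hF⟩))
  · simp at hab
  · simp at hab
  · exact congrArg inr (Quotient.sound (.rel _ _ ⟨by simpa using hab, hF⟩))

def edgeSetoidSumEquiv (F : Set (Sym2 (V ⊕ W))) :
    Quotient (edgeSetoid (G ⊕g H) F) ≃
      Quotient (edgeSetoid G (Sym2.map inl ⁻¹' F)) ⊕
        Quotient (edgeSetoid H (Sym2.map inr ⁻¹' F)) where
  toFun := Quotient.lift _ fun _ _ h => edgeSetoid_sum_le_ker F h
  invFun := Sum.elim
    (Quotient.map inl fun _ _ h => edgeSetoid_le_comap Embedding.sumInl.toHom F h)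
    (Quotient.map inr fun _ _ h => edgeSetoid_le_comap Embedding.sumInr.toHom F h)
  left_inv X := by
    induction X using Quotient.ind with | _ x => cases x <;> rfl
  right_inv := by
    rintro (X | X) <;> induction X using Quotient.ind <;> rfl

variable (F : Set (Sym2 (V ⊕ W)))

@[simp]
theorem edgeSetoidSumEquiv_mk (x : V ⊕ W) :
    edgeSetoidSumEquiv (G := G) (H := H) F ⟦x⟧ = Sum.map (⟦·⟧) (⟦·⟧) x :=
  rfl

@[simp]
theorem mk_inl_eq_mk_inl_iff {a b : V} :
    (⟦inl a⟧ : Quotient (edgeSetoid (G ⊕g H) F)) = ⟦inl b⟧ ↔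
      (⟦a⟧ : Quotient (edgeSetoid G (Sym2.map inl ⁻¹' F))) = ⟦b⟧ := by
  rw [← (edgeSetoidSumEquiv F).injective.eq_iff]
  simp

@[simp]
theorem mk_inr_eq_mk_inr_iff {a b : W} :
    (⟦inr a⟧ : Quotient (edgeSetoid (G ⊕g H) F)) = ⟦inr b⟧ ↔
      (⟦a⟧ : Quotient (edgeSetoid H (Sym2.map inr ⁻¹' F))) = ⟦b⟧ := by
  rw [← (edgeSetoidSumEquiv F).injective.eq_iff]
  simp

@[simp]
theorem mk_inl_ne_mk_inr {a : V} {b : W} :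
    (⟦inl a⟧ : Quotient (edgeSetoid (G ⊕g H) F)) ≠ ⟦inr b⟧ := fun h => by
  simpa using congrArg (edgeSetoidSumEquiv (G := G) (H := H) F) h

def contractESumIso :
    contractE (G ⊕g H) F ≃g
      contractE G (Sym2.map inl ⁻¹' F) ⊕g contractE H (Sym2.map inr ⁻¹' F) where
  toEquiv := edgeSetoidSumEquiv F
  map_rel_iff' {X Y} := by
    induction X using Quotient.ind with | _ x => ?_
    induction Y using Quotient.ind with | _ y => ?_
    cases x <;> cases y <;> simp [contractE, contractQ, Sum.exists, eq_comm]

end Contraction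

theorem Finset.card_preimage_sym2Map_le {f : V → W} (hf : Function.Injective f)
    (F : Finset (Sym2 W)) :
    (F.preimage (Sym2.map f) (Sym2.map.injective hf).injOn).card ≤ F.card :=
  Finset.card_le_card_of_injOn _ (fun _ h => Finset.mem_preimage.mp h)
    (Sym2.map.injective hf).injOn

theorem hasInducedCopy_tK2_succ_contractE_sum_top_iff [Fintype W] (G : SimpleGraph V)
    (F : Finset (Sym2 (V ⊕ W))) (hF : F.card + 2 ≤ Fintype.card W) (s : ℕ) :
    HasInducedCopy (tK2 (s + 1)) (contractE (G ⊕g (⊤ : SimpleGraph W)) F) ↔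
      HasInducedCopy (tK2 s) (contractE G (Sym2.map Sum.inl ⁻¹' (F : Set (Sym2 (V ⊕ W))))) := by
  have := nontrivial_quotient_edgeSetoid (⊤ : SimpleGraph W)
    (F.preimage (Sym2.map Sum.inr) (Sym2.map.injective Sum.inr_injective).injOn)
    ((Nat.add_le_add_right (F.card_preimage_sym2Map_le Sum.inr_injective) 2).trans hF)
  rw [Finset.coe_preimage] at this
  rw [(contractESumIso (F : Set (Sym2 (V ⊕ W)))).hasInducedCopy_iff, contractE_top,
    hasInducedCopy_tK2_succ_sum_top_iff]

theorem not_contractsToFree_of_isEmpty [IsEmpty W] (G : SimpleGraph V) (k : ℕ)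
    (H : SimpleGraph W) : ¬ ContractsToFree G k H :=
  fun ⟨_, _, _, hfree⟩ => hfree (hasInducedCopy_of_isEmpty H _)

end

theorem disjoint_union_clique_iff_general {V : Type*} (G' : SimpleGraph V) (t k : ℕ) :
    ContractsToFree G' k (tK2 (t - 1)) ↔
      ContractsToFree (G'.sum (⊤ : SimpleGraph (Fin (k + 2)))) k (tK2 t) := by
  classical
  obtain _ | s := t
  · simp [not_contractsToFree_of_isEmpty]
  have hcopy (F : Finset (Sym2 (V ⊕ Fin (k + 2)))) (hF : F.card ≤ k) :=
    hasInducedCopy_tK2_succ_contractE_sum_top_iff G' F (by simpa using hF) s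
  have hinl : Function.Injective (Sym2.map (Sum.inl : V → V ⊕ Fin (k + 2))) :=
    Sym2.map.injective Sum.inl_injective
  rw [Nat.add_sub_cancel]
  constructor
  · rintro ⟨F₀, hsub, hcard, hfree⟩
    have hcard' := (F₀.card_image_of_injective hinl).trans_le hcard
    refine ⟨F₀.image _, ?_, hcard', ?_⟩
    · rw [Finset.coe_image, Set.image_subset_iff]
      exact fun e he => SimpleGraph.Embedding.sumInl.map_mem_edgeSet_iff.mpr (hsub he)
    · rwa [hcopy _ hcard', Finset.coe_image, Set.preimage_image_eq _ hinl]
  · rintro ⟨F, hsub, hcard, hfree⟩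
    refine ⟨F.preimage _ hinl.injOn, fun e he => ?_,
      (F.card_preimage_sym2Map_le Sum.inl_injective).trans hcard, ?_⟩
    · exact SimpleGraph.Embedding.sumInl.map_mem_edgeSet_iff.mp (hsub (Finset.mem_preimage.mp he))
    · rwa [Finset.coe_preimage, ← hcopy F hcard]

/-- For `t ≥ 3`, `G'` can be made `(t-1)K_2`-free by at most `k` edge
contractions iff `G' + K_{k+2}` can be made `tK_2`-free by at most `k` edge
contractions. -/
theorem disjoint_union_clique_iff {V : Type*} (G' : SimpleGraph V) (t k : ℕ)
    (ht : 3 ≤ t) :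
    ContractsToFree G' k (tK2 (t - 1)) ↔
      ContractsToFree (G'.sum (⊤ : SimpleGraph (Fin (k + 2)))) k (tK2 t) :=
  disjoint_union_clique_iff_general G' t k
end

section
/- Let P be a partition of the vertices of a graph G such that each part induces a connected subgraph, and suppose |P| ≥ h where h = n(n+1) + d for the graph G of Eppstein's construction (with the middle set M being an independent set of size n, no universal vertices in the underlying graph G'). If G/P is a complete graph, then no part of P is a singleton subset of M. -/
variable {V W : Type*}

/-!
If the middle vertex `m_i` formed a part `{m_i}` on its own, completeness of `G/P` would force
every other part to contain a neighbour of `m_i`, so `|P| ≤ deg m_i + 1`. Since `G'` has no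
universal vertex, some `L_j` is not joined to `m_i`, whence `deg m_i ≤ d + (n - 1)(n + 1)`,
and `|P| ≤ d + (n - 1)(n + 1) + 1 < n(n + 1) + d`.
-/

section Contraction

variable {V : Type*}

/-- Every other part of a contraction that is complete to a singleton part `{v}` meets the
neighbourhood of `v`. -/
theorem card_quotient_le_card_neighborSet_add_one [Finite V] (G : SimpleGraph V)
    (s : Setoid V) (v : V) (hv : ∀ u, s.r u v → u = v)
    (hadj : ∀ x, x ≠ Quotient.mk s v → (contractQ G s).Adj x (Quotient.mk s v)) :
    Nat.card (Quotient s) ≤ Nat.card (G.neighborSet v) + 1 := by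
  let f : Option (G.neighborSet v) → Quotient s :=
    fun o => o.elim (Quotient.mk s v) (fun u => Quotient.mk s u.1)
  have hf : Function.Surjective f := by
    intro x
    by_cases hx : x = Quotient.mk s v
    · exact ⟨none, hx.symm⟩
    obtain ⟨-, a, b, rfl, hb, hab⟩ := hadj x hx
    obtain rfl := hv b (Quotient.exact hb)
    exact ⟨some ⟨a, hab.symm⟩, rfl⟩
  simpa only [Finite.card_option] using Nat.card_le_card_of_surjective f hf

end Contraction

section Eppstein

variable {n d : ℕ} (G' : SimpleGraph (Fin n))

/-- The vertices of `U` and of the cliques `L_j` with `j ≠ j₀`. -/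
def eppsteinAvoiding (j₀ : Fin n) : Fin d ⊕ ({j // j ≠ j₀} × Fin (n + 1)) → EppV n d :=
  Sum.elim Sum.inl fun p => Sum.inr (Sum.inr (p.1.1, p.2))

theorem eppstein_neighborSet_middle_subset {i j₀ : Fin n} (hj₀ : j₀ ≠ i)
    (hij₀ : ¬ G'.Adj i j₀) :
    (eppstein G' d).neighborSet (Sum.inr (Sum.inl i)) ⊆ Set.range (eppsteinAvoiding j₀) := by
  rintro (u | j | ⟨j, k⟩) hadj
  · exact ⟨Sum.inl u, rfl⟩
  · simp [eppstein] at hadj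
  · have hj : j ≠ j₀ := by
      rintro rfl
      simp only [SimpleGraph.mem_neighborSet, eppstein, SimpleGraph.fromRel_adj] at hadj
      grind
    exact ⟨Sum.inr (⟨j, hj⟩, k), rfl⟩

theorem card_eppstein_neighborSet_middle_le {i j₀ : Fin n} (hj₀ : j₀ ≠ i)
    (hij₀ : ¬ G'.Adj i j₀) :
    Nat.card ((eppstein G' d).neighborSet (Sum.inr (Sum.inl i))) ≤ d + (n - 1) * (n + 1) :=
  calc Nat.card ((eppstein G' d).neighborSet (Sum.inr (Sum.inl i)))
      ≤ Nat.card (Set.range (eppsteinAvoiding (d := d) j₀)) :=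
        Nat.card_mono (Set.toFinite _) (eppstein_neighborSet_middle_subset G' hj₀ hij₀)
    _ ≤ Nat.card (Fin d ⊕ ({j // j ≠ j₀} × Fin (n + 1))) := Finite.card_range_le _
    _ = d + (n - 1) * (n + 1) := by
        simp [Fintype.card_subtype_compl]

end Eppstein

theorem eppstein_no_singleton_middle_part_general {n d : ℕ}
    (G' : SimpleGraph (Fin n))
    (hnouniv : ∀ i : Fin n, ∃ j : Fin n, j ≠ i ∧ ¬ G'.Adj i j)
    (s : Setoid (EppV n d))
    (hcard : n * (n + 1) + d ≤ Nat.card (Quotient s))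
    (hcomplete : ∀ x y : Quotient s, x ≠ y → (contractQ (eppstein G' d) s).Adj x y) :
    ∀ i : Fin n, ∃ v : EppV n d,
      v ≠ Sum.inr (Sum.inl i) ∧ s.r v (Sum.inr (Sum.inl i)) := by
  intro i
  by_contra! hsingleton
  obtain ⟨j₀, hj₀, hij₀⟩ := hnouniv i
  have hparts := card_quotient_le_card_neighborSet_add_one (eppstein G' d) s _
    (fun u hu => by_contra fun hne => hsingleton u hne hu) (fun x hx => hcomplete x _ hx)
  have hdeg := card_eppstein_neighborSet_middle_le (d := d) G' hj₀ hij₀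
  obtain ⟨m, rfl⟩ : ∃ m, n = m + 1 := ⟨n - 1, by have := i.pos; omega⟩
  simp only [Nat.add_sub_cancel] at hdeg
  nlinarith

/-- In Eppstein's construction (from `G'` on `n ≥ 2` vertices with no
universal vertex), if `P` is a partition into connected parts with at least
`h = n(n+1) + d` parts and `G/P` is a complete graph, then no part of `P` is a singleton
subset of the middle set `M`. -/
theorem eppstein_no_singleton_middle_part {n d : ℕ} (hn : 2 ≤ n)
    (G' : SimpleGraph (Fin n))
    (hnouniv : ∀ i : Fin n, ∃ j : Fin n, j ≠ i ∧ ¬ G'.Adj i j)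
    (s : Setoid (EppV n d))
    (hconn : ∀ v : EppV n d, ((eppstein G' d).induce {u | s.r u v}).Connected)
    (hcard : n * (n + 1) + d ≤ Nat.card (Quotient s))
    (hcomplete : ∀ x y : Quotient s, x ≠ y → (contractQ (eppstein G' d) s).Adj x y) :
    ∀ i : Fin n, ∃ v : EppV n d,
      v ≠ Sum.inr (Sum.inl i) ∧ s.r v (Sum.inr (Sum.inl i)) :=
  eppstein_no_singleton_middle_part_general G' hnouniv s hcard hcomplete
end

section
/- Let G be a graph and P a partition of V(G) into parts inducing connected subgraphs with cost(P) ≤ k. If K is a clique of G with |K| = k+1 such that the vertices of K have no neighbors outside K except possibly through one designated attachment set, then some part of P is a (nonempty) subset of K. -/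
variable {V W : Type*}

/-! If every vertex of `K` shared its part with a vertex outside `K`, each part would contain
strictly more vertices than it has in `K` (when that is nonzero), so summing `|part| - 1` over the parts gives
`cost ≥ |K| = k + 1`. -/

open Finset

theorem card_filter_mk_lt_ncard_class {V : Type*} [Finite V] (s : Setoid V)
    [DecidableEq (Quotient s)] (K : Finset V)
    (hK : ∀ v ∈ K, ¬ {u | s.r u v} ⊆ (K : Set V)) {c : Quotient s}
    (hc : (K.filter (Quotient.mk s · = c)).Nonempty) :
    (K.filter (Quotient.mk s · = c)).card < {v : V | Quotient.mk s v = c}.ncard := by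
  obtain ⟨v, hv⟩ := hc
  rw [mem_filter] at hv
  obtain ⟨u, hu, huK⟩ := Set.not_subset.mp (hK v hv.1)
  rw [← Set.ncard_coe_finset]
  refine Set.ncard_lt_ncard (Set.ssubset_iff_of_subset ?_ |>.mpr ⟨u, ?_, ?_⟩)
  · intro x hx
    exact (mem_filter.mp hx).2
  · exact (Quotient.sound hu).trans hv.2
  · exact fun hu' => huK (mem_filter.mp hu').1

theorem card_le_setoidCost_of_forall_class_not_subset {V : Type*} [Finite V] (s : Setoid V)
    (K : Finset V) (hK : ∀ v ∈ K, ¬ {u | s.r u v} ⊆ (K : Set V)) :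
    K.card ≤ setoidCost s := by
  classical
  have : Fintype V := Fintype.ofFinite V
  have : Fintype (Quotient s) := Fintype.ofFinite _
  rw [setoidCost, finsum_eq_sum_of_fintype,
    card_eq_sum_card_fiberwise fun v _ => mem_univ (Quotient.mk s v)]
  refine sum_le_sum fun c _ => ?_
  rcases (K.filter (Quotient.mk s · = c)).eq_empty_or_nonempty with hempty | hc
  · simp [hempty]
  · have := card_filter_mk_lt_ncard_class s K hK hc
    omega

theorem clique_contains_part_general {V : Type*} [Fintype V] (k : ℕ)
    (s : Setoid V)
    (hcost : setoidCost s ≤ k)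
    (K : Finset V) (hK : K.card = k + 1) :
    ∃ v ∈ K, {u : V | s.r u v} ⊆ (↑K : Set V) := by
  by_contra! h
  have := card_le_setoidCost_of_forall_class_not_subset s K h
  omega

/-- If `P` is a partition into connected parts with cost at most `k`, and
`K` is a clique of size `k+1` whose vertices have no neighbors outside `K` except through
one designated attachment set, then some part of `P` is a subset of `K`. -/
theorem clique_contains_part {V : Type*} [Fintype V] (G : SimpleGraph V) (k : ℕ)
    (s : Setoid V)
    (hconn : ∀ v : V, (G.induce {u | s.r u v}).Connected)
    (hcost : setoidCost s ≤ k)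
    (K : Finset V) (hK : K.card = k + 1) (hclique : G.IsClique (↑K : Set V))
    (A : Set V) (hattach : ∀ v ∈ K, ∀ u : V, G.Adj v u → u ∈ K ∨ u ∈ A) :
    ∃ v ∈ K, {u : V | s.r u v} ⊆ (↑K : Set V) :=
  clique_contains_part_general k s hcost K hK
end
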